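/- arXiv:2006.02412 — 2 statements merged into one kernel-verified Lean document; each statement's English description precedes it below -/
import Mathlib

section
/- Let $\{S_i(x) = r_i x + t_i + \lambda_i\}_{i=1}^m$ be a translation family of self-similar IFSs on $\mathbb{R}$ with contraction ratios $r_i \in (-1,1)\setminus\{0\}$. Fix infinite sequences $\mathbf{i}, \mathbf{j} \in \{1,\ldots,m\}^{\mathbb{N}}$ with $i_1 \neq j_1$, and suppose $|r_{i_1}| + |r_{j_1}| < 1$ and more generally $|r_i| + |r_j| < 1$ for all $i \neq j$. Then there exists $p \in \{i_1, j_1\}$ such that $\big|\frac{\partial}{\partial\lambda_p}\big(\Pi_{\underline{\lambda}}(\mathbf{i}) - \Pi_{\underline{\lambda}}(\mathbf{j})\big)\big| \ge 1 - |r_{i_1}| - |r_{j_1}| > 0$. -/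
/-!
Both `Π_λ(𝐢)` and `∂Π_λ(𝐢)/∂λ_p` are series `W_c(𝐢) = ∑ₙ r_{i₀}⋯r_{i_{n-1}} c(iₙ)`, the latter
with `c = 𝟙_p`. With `a = i₀`, `b = j₀` and `D = W_{𝟙_a - 𝟙_b}`, the difference of the two
partial derivatives is `D(𝐢) - D(𝐣) = 2 + r_a D(σ𝐢) - r_b D(σ𝐣)`, so it suffices to bound this
from below by `2 (1 - |r_a| - |r_b|)`. Since `D(𝐱) = c(x₀) + r_{x₀} D(σ𝐱)` with
`c = 𝟙_a - 𝟙_b`, every value of `D` lies in any closed interval `[-Q, P] ∋ 0` invariant under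
the maps `z ↦ c(s) + r_s z`. The hypothesis `|r_s| + |r_a|, |r_s| + |r_b| < 1` lets such an
interval be chosen, according to the signs of `r_a` and `r_b`, so tight that
`r_a z - r_b z' ≥ -2 (|r_a| + |r_b|)` on it.
-/

/-- Natural projection of the translation family
`S_i(x) = r_i x + t_i + λ_i`:  `Π_λ(𝐢) = ∑ₙ r_{i₀}⋯r_{i_{n-1}} (t_{iₙ} + λ_{iₙ})`. -/
noncomputable def transProj {m : ℕ} (r t : Fin m → ℝ) (lam : Fin m → ℝ) (i : ℕ → Fin m) : ℝ :=
  ∑' n : ℕ, (∏ k ∈ Finset.range n, r (i k)) * (t (i n) + lam (i n))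

open Finset Set

section WeightedSum

variable {α : Type*} (r c : α → ℝ)

noncomputable def weightedSum (x : ℕ → α) : ℝ :=
  ∑' n, (∏ k ∈ range n, r (x k)) * c (x n)

variable {r}

theorem summable_weightedSum [Finite α] (hr : ∀ k, |r k| < 1) (x : ℕ → α) :
    Summable fun n ↦ (∏ k ∈ range n, r (x k)) * c (x n) := by
  have : Nonempty α := ⟨x 0⟩
  obtain ⟨k₀, hk₀⟩ := Finite.exists_max fun k ↦ |r k|
  obtain ⟨l₀, hl₀⟩ := Finite.exists_max fun k ↦ |c k|
  refine .of_norm_bounded ((summable_geometric_of_lt_one (abs_nonneg _) (hr k₀)).mul_right |c l₀|)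
    fun n ↦ ?_
  rw [norm_mul, norm_prod]
  gcongr
  · exact (prod_le_prod (fun _ _ ↦ norm_nonneg _) fun k _ ↦ hk₀ (x k)).trans_eq (by simp)
  · exact hl₀ _

theorem weightedSum_add [Finite α] (hr : ∀ k, |r k| < 1) (c' : α → ℝ) (x : ℕ → α) :
    weightedSum r (c + c') x = weightedSum r c x + weightedSum r c' x := by
  simp only [weightedSum, Pi.add_apply, mul_add]
  exact (summable_weightedSum c hr x).tsum_add (summable_weightedSum c' hr x)

theorem weightedSum_sub [Finite α] (hr : ∀ k, |r k| < 1) (c' : α → ℝ) (x : ℕ → α) :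
    weightedSum r (c - c') x = weightedSum r c x - weightedSum r c' x := by
  simp only [weightedSum, Pi.sub_apply, mul_sub]
  exact (summable_weightedSum c hr x).tsum_sub (summable_weightedSum c' hr x)

theorem weightedSum_smul (a : ℝ) (x : ℕ → α) :
    weightedSum r (a • c) x = a * weightedSum r c x := by
  simp only [weightedSum, Pi.smul_apply, smul_eq_mul, mul_left_comm _ a, tsum_mul_left]

theorem prod_range_succ_mul_shift (x : ℕ → α) (n : ℕ) :
    (∏ k ∈ range (n + 1), r (x k)) * c (x (n + 1)) =
      r (x 0) * ((∏ k ∈ range n, r (x (k + 1))) * c (x (n + 1))) := by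
  rw [prod_range_succ']
  ring

theorem weightedSum_eq_add_mul_shift [Finite α] (hr : ∀ k, |r k| < 1) (x : ℕ → α) :
    weightedSum r c x = c (x 0) + r (x 0) * weightedSum r c (fun n ↦ x (n + 1)) := by
  rw [weightedSum, (summable_weightedSum c hr x).tsum_eq_zero_add]
  simp only [prod_range_succ_mul_shift, tsum_mul_left, prod_range_zero, one_mul]
  rfl

theorem weightedSum_mem_of_mapsTo {I : Set ℝ} (hI : IsClosed I) (h0 : 0 ∈ I)
    (hmaps : ∀ s, MapsTo (fun z ↦ c s + r s * z) I I) (x : ℕ → α) : weightedSum r c x ∈ I := by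
  have partial_mem : ∀ N (x : ℕ → α), ∑ n ∈ range N, (∏ k ∈ range n, r (x k)) * c (x n) ∈ I := by
    intro N
    induction N with
    | zero => intro x; simpa using h0
    | succ N ih =>
      intro x
      rw [sum_range_succ', prod_range_zero, one_mul, add_comm]
      simp only [prod_range_succ_mul_shift, ← mul_sum]
      exact hmaps _ (ih _)
  by_cases hs : Summable fun n ↦ (∏ k ∈ range n, r (x k)) * c (x n)
  · exact hI.mem_of_tendsto hs.hasSum.tendsto_sum_nat (.of_forall (partial_mem · x))
  · rw [weightedSum, tsum_eq_zero_of_not_summable hs]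
    exact h0

end WeightedSum

section TrappingInterval

theorem mapsTo_affine_Icc {c ρ a b : ℝ} (ha : c + ρ * a ∈ Icc a b) (hb : c + ρ * b ∈ Icc a b) :
    MapsTo (fun z ↦ c + ρ * z) (Icc a b) (Icc a b) := by
  rintro z ⟨hza, hzb⟩
  refine uIcc_subset_Icc ha hb ?_
  rcases le_total 0 ρ with hρ | hρ
  · exact Icc_subset_uIcc ⟨by nlinarith, by nlinarith⟩
  · exact Icc_subset_uIcc' ⟨by nlinarith, by nlinarith⟩

theorem mapsTo_mul_Icc {ρ P Q : ℝ} (hP : 0 ≤ P) (hQ : 0 ≤ Q) (hρ : |ρ| ≤ 1)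
    (hPQ : |ρ| * P ≤ Q) (hQP : |ρ| * Q ≤ P) : MapsTo (fun z ↦ ρ * z) (Icc (-Q) P) (Icc (-Q) P) := by
  rintro z ⟨hzQ, hzP⟩
  rcases abs_cases ρ with ⟨hρ', h0⟩ | ⟨hρ', h0⟩ <;> rw [hρ'] at hρ hPQ hQP <;>
    constructor <;> nlinarith

structure IsTrappingInterval (ρa ρb P Q : ℝ) : Prop where
  nonneg_P : 0 ≤ P
  nonneg_Q : 0 ≤ Q
  mapsTo_one_add : MapsTo (fun z ↦ 1 + ρa * z) (Icc (-Q) P) (Icc (-Q) P)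
  mapsTo_neg_one_add : MapsTo (fun z ↦ -1 + ρb * z) (Icc (-Q) P) (Icc (-Q) P)
  mul_P_le : (1 - |ρa|) * P ≤ Q
  mul_Q_le : (1 - |ρb|) * Q ≤ P
  neg_two_mul_le : ∀ z ∈ Icc (-Q) P, ∀ z' ∈ Icc (-Q) P, -2 * (|ρa| + |ρb|) ≤ ρa * z - ρb * z'

theorem IsTrappingInterval.mapsTo_mul {ρa ρb P Q ρ : ℝ} (hT : IsTrappingInterval ρa ρb P Q)
    (ha : |ρ| + |ρa| ≤ 1) (hb : |ρ| + |ρb| ≤ 1) :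
    MapsTo (fun z ↦ ρ * z) (Icc (-Q) P) (Icc (-Q) P) :=
  mapsTo_mul_Icc hT.nonneg_P hT.nonneg_Q (by linarith [abs_nonneg ρa])
    ((mul_le_mul_of_nonneg_right (by linarith) hT.nonneg_P).trans hT.mul_P_le)
    ((mul_le_mul_of_nonneg_right (by linarith) hT.nonneg_Q).trans hT.mul_Q_le)

variable {u v : ℝ}

/- In each sign case `P` and `-Q` are the supremum and infimum of `D`, both attained on
`{a, b}^ℕ`; e.g. `P = 1 / (1 - u)`, the value at `aaa…`, when `r_a = u ≥ 0`. -/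

theorem exists_isTrappingInterval_pos_pos (hu : 0 ≤ u) (hv : 0 ≤ v) (h : u + v < 1) :
    ∃ P Q, IsTrappingInterval u v P Q := by
  obtain ⟨P, hP⟩ : ∃ P, (1 - u) * P = 1 := ⟨(1 - u)⁻¹, mul_inv_cancel₀ (by linarith)⟩
  obtain ⟨Q, hQ⟩ : ∃ Q, (1 - v) * Q = 1 := ⟨(1 - v)⁻¹, mul_inv_cancel₀ (by linarith)⟩
  have hP1 : 1 ≤ P := by nlinarith
  have hQ1 : 1 ≤ Q := by nlinarith
  have huQ : u * Q ≤ u + v := by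
    nlinarith [mul_le_mul_of_nonneg_right (by linarith : u ≤ 1 - v) (by linarith : 0 ≤ Q)]
  have hvP : v * P ≤ u + v := by
    nlinarith [mul_le_mul_of_nonneg_right (by linarith : v ≤ 1 - u) (by linarith : 0 ≤ P)]
  refine ⟨P, Q, by linarith, by linarith, mapsTo_affine_Icc ⟨?_, ?_⟩ ⟨?_, ?_⟩,
    mapsTo_affine_Icc ⟨?_, ?_⟩ ⟨?_, ?_⟩, ?_, ?_, ?_⟩
  all_goals simp -failIfUnchanged only [abs_of_nonneg hu, abs_of_nonneg hv]
  all_goals try nlinarith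
  rintro z ⟨hz, -⟩ z' ⟨-, hz'⟩
  nlinarith [mul_le_mul_of_nonneg_left hz hu, mul_le_mul_of_nonneg_left hz' hv]

theorem exists_isTrappingInterval_pos_neg (hu : 0 ≤ u) (hv : 0 ≤ v) (h : u + v < 1) :
    ∃ P Q, IsTrappingInterval u (-v) P Q := by
  obtain ⟨P, hP⟩ : ∃ P, (1 - u) * P = 1 := ⟨(1 - u)⁻¹, mul_inv_cancel₀ (by linarith)⟩
  have hP1 : 1 ≤ P := by nlinarith
  have hvP := mul_nonneg hv (by linarith : 0 ≤ P)
  refine ⟨P, 1 + v * P, by linarith, by nlinarith, mapsTo_affine_Icc ⟨?_, ?_⟩ ⟨?_, ?_⟩,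
    mapsTo_affine_Icc ⟨?_, ?_⟩ ⟨?_, ?_⟩, ?_, ?_, ?_⟩
  all_goals simp -failIfUnchanged only [abs_neg, abs_of_nonneg hu, abs_of_nonneg hv]
  all_goals try nlinarith
  rintro z ⟨hz, -⟩ z' ⟨hz', -⟩
  nlinarith [mul_le_mul_of_nonneg_left hz hu, mul_le_mul_of_nonneg_left hz' hv]

theorem exists_isTrappingInterval_neg_pos (hu : 0 ≤ u) (hv : 0 ≤ v) (h : u + v < 1) :
    ∃ P Q, IsTrappingInterval (-u) v P Q := by
  obtain ⟨Q, hQ⟩ : ∃ Q, (1 - v) * Q = 1 := ⟨(1 - v)⁻¹, mul_inv_cancel₀ (by linarith)⟩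
  have hQ1 : 1 ≤ Q := by nlinarith
  have huQ := mul_nonneg hu (by linarith : 0 ≤ Q)
  refine ⟨1 + u * Q, Q, by nlinarith, by linarith, mapsTo_affine_Icc ⟨?_, ?_⟩ ⟨?_, ?_⟩,
    mapsTo_affine_Icc ⟨?_, ?_⟩ ⟨?_, ?_⟩, ?_, ?_, ?_⟩
  all_goals simp -failIfUnchanged only [abs_neg, abs_of_nonneg hu, abs_of_nonneg hv]
  all_goals try nlinarith
  rintro z ⟨-, hz⟩ z' ⟨-, hz'⟩
  nlinarith [mul_le_mul_of_nonneg_left hz hu, mul_le_mul_of_nonneg_left hz' hv]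

theorem exists_isTrappingInterval_neg_neg (hu : 0 ≤ u) (hv : 0 ≤ v) (h : u + v < 1) :
    ∃ P Q, IsTrappingInterval (-u) (-v) P Q := by
  have huv : 0 < 1 - u * v := by nlinarith
  obtain ⟨P, hP⟩ : ∃ P, (1 - u * v) * P = 1 + u := ⟨(1 + u) / (1 - u * v), by field_simp⟩
  obtain ⟨Q, hQ⟩ : ∃ Q, (1 - u * v) * Q = 1 + v := ⟨(1 + v) / (1 - u * v), by field_simp⟩
  have hPQ : P = 1 + u * Q := mul_left_cancel₀ huv.ne' (by linear_combination hP - u * hQ)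
  have hQP : Q = 1 + v * P := mul_left_cancel₀ huv.ne' (by linear_combination hQ - v * hP)
  have hP0 : 0 ≤ P := by nlinarith
  have hQ0 : 0 ≤ Q := by nlinarith
  have key : u * P + v * Q ≤ 2 * (u + v) := by
    refine le_of_mul_le_mul_right ?_ huv
    nlinarith [mul_nonneg (mul_nonneg hu hv) (by linarith : 0 ≤ 1 - u - v),
      mul_nonneg (by linarith : 0 ≤ u + v) (by linarith : 0 ≤ 1 - u - v)]
  refine ⟨P, Q, hP0, hQ0, mapsTo_affine_Icc ⟨?_, ?_⟩ ⟨?_, ?_⟩,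
    mapsTo_affine_Icc ⟨?_, ?_⟩ ⟨?_, ?_⟩, ?_, ?_, ?_⟩
  all_goals simp -failIfUnchanged only [abs_neg, abs_of_nonneg hu, abs_of_nonneg hv]
  all_goals try nlinarith
  rintro z ⟨-, hz⟩ z' ⟨hz', -⟩
  nlinarith [mul_le_mul_of_nonneg_left hz hu, mul_le_mul_of_nonneg_left hz' hv]

theorem exists_isTrappingInterval {ρa ρb : ℝ} (h : |ρa| + |ρb| < 1) :
    ∃ P Q, IsTrappingInterval ρa ρb P Q := by
  rcases le_total 0 ρa with ha | ha <;> rcases le_total 0 ρb with hb | hb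
  · rw [abs_of_nonneg ha, abs_of_nonneg hb] at h
    exact exists_isTrappingInterval_pos_pos ha hb h
  · rw [abs_of_nonneg ha, abs_of_nonpos hb] at h
    simpa using exists_isTrappingInterval_pos_neg ha (neg_nonneg.2 hb) h
  · rw [abs_of_nonpos ha, abs_of_nonneg hb] at h
    simpa using exists_isTrappingInterval_neg_pos (neg_nonneg.2 ha) hb h
  · rw [abs_of_nonpos ha, abs_of_nonpos hb] at h
    simpa using exists_isTrappingInterval_neg_neg (neg_nonneg.2 ha) (neg_nonneg.2 hb) h

end TrappingInterval

section Separation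

variable {α : Type*} {r : α → ℝ}

theorem abs_lt_one_of_pairwise (hpair : Pairwise fun k l ↦ |r k| + |r l| < 1) {a b : α}
    (hab : a ≠ b) (k : α) : |r k| < 1 := by
  rcases eq_or_ne k a with rfl | hka
  · linarith [hpair hab, abs_nonneg (r b)]
  · linarith [hpair hka, abs_nonneg (r a)]

variable [Finite α] [DecidableEq α]

theorem two_mul_le_weightedSum_sub (hpair : Pairwise fun k l ↦ |r k| + |r l| < 1)
    {i j : ℕ → α} (hij : i 0 ≠ j 0) :
    2 * (1 - |r (i 0)| - |r (j 0)|) ≤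
      weightedSum r (Pi.single (i 0) 1 - Pi.single (j 0) 1) i -
        weightedSum r (Pi.single (i 0) 1 - Pi.single (j 0) 1) j := by
  have hr := abs_lt_one_of_pairwise hpair hij
  set d : α → ℝ := Pi.single (i 0) 1 - Pi.single (j 0) 1
  obtain ⟨P, Q, hT⟩ := exists_isTrappingInterval (hpair hij)
  have hmem (x : ℕ → α) : weightedSum r d x ∈ Icc (-Q) P := by
    refine weightedSum_mem_of_mapsTo d isClosed_Icc ⟨by linarith [hT.nonneg_Q], hT.nonneg_P⟩
      (fun s ↦ ?_) x
    rcases eq_or_ne s (i 0) with rfl | hsa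
    · simpa [d, hij] using hT.mapsTo_one_add
    rcases eq_or_ne s (j 0) with rfl | hsb
    · simpa [d, hsa] using hT.mapsTo_neg_one_add
    · simpa [d, hsa, hsb] using hT.mapsTo_mul (hpair hsa).le (hpair hsb).le
  have hda : d (i 0) = 1 := by simp [d, hij]
  have hdb : d (j 0) = -1 := by simp [d, hij.symm]
  rw [weightedSum_eq_add_mul_shift d hr i, weightedSum_eq_add_mul_shift d hr j, hda, hdb]
  linarith [hT.neg_two_mul_le _ (hmem fun n ↦ i (n + 1)) _ (hmem fun n ↦ j (n + 1))]

theorem exists_le_abs_weightedSum_single_sub (hpair : Pairwise fun k l ↦ |r k| + |r l| < 1)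
    {i j : ℕ → α} (hij : i 0 ≠ j 0) :
    ∃ p, (p = i 0 ∨ p = j 0) ∧ 1 - |r (i 0)| - |r (j 0)| ≤
      |weightedSum r (Pi.single p 1) i - weightedSum r (Pi.single p 1) j| := by
  have hr := abs_lt_one_of_pairwise hpair hij
  have key := two_mul_le_weightedSum_sub hpair hij
  rw [weightedSum_sub _ hr, weightedSum_sub _ hr] at key
  set x := weightedSum r (Pi.single (i 0) 1) i - weightedSum r (Pi.single (i 0) 1) j
  set y := weightedSum r (Pi.single (j 0) 1) i - weightedSum r (Pi.single (j 0) 1) j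
  have hxy : 2 * (1 - |r (i 0)| - |r (j 0)|) ≤ |x| + |y| :=
    (show _ ≤ x - y by linarith).trans ((le_abs_self _).trans (abs_sub x y))
  by_contra! h
  linarith [h _ (.inl rfl), h _ (.inr rfl)]

end Separation

theorem transProj_eq_weightedSum {m : ℕ} (r t lam : Fin m → ℝ) (x : ℕ → Fin m) :
    transProj r t lam x = weightedSum r (t + lam) x :=
  rfl

theorem transProj_update {m : ℕ} {r : Fin m → ℝ} (hr : ∀ k, |r k| < 1) (t lam : Fin m → ℝ)
    (p : Fin m) (s : ℝ) (x : ℕ → Fin m) :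
    transProj r t (Function.update lam p s) x =
      transProj r t lam x + (s - lam p) * weightedSum r (Pi.single p 1) x := by
  have hc : t + Function.update lam p s = (t + lam) + (s - lam p) • Pi.single p 1 := by
    ext k
    rcases eq_or_ne k p with rfl | hk <;> simp [*]
  rw [transProj_eq_weightedSum, hc, weightedSum_add _ hr, weightedSum_smul,
    transProj_eq_weightedSum]

theorem deriv_transProj_update_sub {m : ℕ} {r : Fin m → ℝ} (hr : ∀ k, |r k| < 1)
    (t lam : Fin m → ℝ) (p : Fin m) (i j : ℕ → Fin m) :
    deriv (fun s : ℝ ↦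
        transProj r t (Function.update lam p s) i - transProj r t (Function.update lam p s) j)
      (lam p) = weightedSum r (Pi.single p 1) i - weightedSum r (Pi.single p 1) j := by
  simp only [transProj_update hr]
  refine HasDerivAt.deriv ?_
  have hlin (E : ℝ) : HasDerivAt (fun s ↦ (s - lam p) * E) E (lam p) := by
    simpa using ((hasDerivAt_id (lam p)).sub_const (lam p)).mul_const E
  exact ((hlin _).const_add _).sub ((hlin _).const_add _)

theorem stmt4_general (m : ℕ) (r t : Fin m → ℝ)
    (hpair : ∀ k l, k ≠ l → |r k| + |r l| < 1)
    (i j : ℕ → Fin m) (hij : i 0 ≠ j 0) (lam : Fin m → ℝ) :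
    ∃ p : Fin m, (p = i 0 ∨ p = j 0) ∧
      0 < 1 - |r (i 0)| - |r (j 0)| ∧
      1 - |r (i 0)| - |r (j 0)| ≤
        |deriv (fun s : ℝ =>
          transProj r t (Function.update lam p s) i -
          transProj r t (Function.update lam p s) j) (lam p)| := by
  have hr := abs_lt_one_of_pairwise hpair hij
  obtain ⟨p, hp, hle⟩ := exists_le_abs_weightedSum_single_sub hpair hij
  refine ⟨p, hp, by linarith [hpair _ _ hij], ?_⟩
  rwa [deriv_transProj_update_sub hr]

/-- Lemma 2.8: for a translation family of self-similar IFSs with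
`|r_i| + |r_j| < 1` for all `i ≠ j`, for any sequences `𝐢, 𝐣` with different first
symbols, there is `p ∈ {i₁, j₁}` with
`|∂/∂λ_p (Π_λ(𝐢) - Π_λ(𝐣))| ≥ 1 - |r_{i₁}| - |r_{j₁}| > 0`. -/
theorem stmt4 (m : ℕ) (r t : Fin m → ℝ)
    (hr : ∀ k, r k ≠ 0 ∧ |r k| < 1)
    (hpair : ∀ k l, k ≠ l → |r k| + |r l| < 1)
    (i j : ℕ → Fin m) (hij : i 0 ≠ j 0) (lam : Fin m → ℝ) :
    ∃ p : Fin m, (p = i 0 ∨ p = j 0) ∧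
      0 < 1 - |r (i 0)| - |r (j 0)| ∧
      1 - |r (i 0)| - |r (j 0)| ≤
        |deriv (fun s : ℝ =>
          transProj r t (Function.update lam p s) i -
          transProj r t (Function.update lam p s) j) (lam p)| :=
  stmt4_general m r t hpair i j hij lam
end

section
/- In the complete metric space $\Theta_{\beta,\rho}^m(X)$ of conformal IFSs with the metric $\mathrm{dist}(\mathcal{T},\mathcal{G}) = \max_i \vertiii{T_i - G_i}$ (where $\vertiii{h} = \|h\|_{\sup} + \|h'\|_{\sup} + \sup_{x\neq y}|h'(x)-h'(y)|/|x-y|^\alpha$), the set of IFSs failing the Weak Separation Property is a $G_\delta$ set. -/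
/-- Composition `S_{u₁} ∘ ⋯ ∘ S_{uₙ}` along a finite word. -/
def wordComp {m : ℕ} (S : Fin m → ℝ → ℝ) : List (Fin m) → ℝ → ℝ
  | [] => id
  | i :: u => S i ∘ wordComp S u

/-- Natural projection (limit of the images of the basepoint `x₀`). -/
noncomputable def natProj {m : ℕ} (S : Fin m → ℝ → ℝ) (x₀ : ℝ) (i : ℕ → Fin m) : ℝ :=
  Filter.limUnder Filter.atTop
    (fun n => wordComp S (List.ofFn (fun k : Fin n => i k)) x₀)

/-- Attractor of the IFS. -/
noncomputable def attractor {m : ℕ} (S : Fin m → ℝ → ℝ) (x₀ : ℝ) : Set ℝ :=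
  Set.range (natProj S x₀)

/-- The family `Φ(x,r)` of restrictions to the attractor. -/
noncomputable def PhiFam {m : ℕ} (S : Fin m → ℝ → ℝ) (x₀ x r : ℝ) :
    Set ((attractor S x₀) → ℝ) :=
  {g | ∃ u : List (Fin m),
    Metric.diam (wordComp S u '' attractor S x₀) ≤ r ∧
    r < Metric.diam (wordComp S u.dropLast '' attractor S x₀) ∧
    (wordComp S u '' attractor S x₀ ∩ Metric.closedBall x r).Nonempty ∧
    g = (attractor S x₀).restrict (wordComp S u)}

/-- The Weak Separation Property: `sup_{x,r} #Φ(x,r) < ∞`. -/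
noncomputable def WSPholds {m : ℕ} (S : Fin m → ℝ → ℝ) (x₀ : ℝ) : Prop :=
  ∃ N : ℕ, ∀ x ∈ attractor S x₀, ∀ r > (0 : ℝ),
    (PhiFam S x₀ x r).Finite ∧ (PhiFam S x₀ x r).ncard ≤ N

/-- Membership in the space `Θ_{β,ρ}^m(X)` of conformal IFSs on `X = [x₀,x₁]`. -/
def ThetaSet (m : ℕ) (x₀ x₁ β ρ α : ℝ) : Set (Fin m → ℝ → ℝ) :=
  {S | ∀ i : Fin m,
    Set.MapsTo (S i) (Set.Icc x₀ x₁) (Set.Icc x₀ x₁) ∧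
    Set.InjOn (S i) (Set.Icc x₀ x₁) ∧
    DifferentiableOn ℝ (S i) (Set.Icc x₀ x₁) ∧
    (∀ x ∈ Set.Icc x₀ x₁, β ≤ |deriv (S i) x| ∧ |deriv (S i) x| ≤ ρ) ∧
    ∃ H : ℝ, ∀ x ∈ Set.Icc x₀ x₁, ∀ y ∈ Set.Icc x₀ x₁,
      |deriv (S i) x - deriv (S i) y| ≤ H * |x - y| ^ α}

/-- The metric `dist(𝒯,𝒢) = maxᵢ (‖Tᵢ-Gᵢ‖_∞ + ‖Tᵢ'-Gᵢ'‖_∞ + Hölder seminorm)`. -/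
noncomputable def distTheta {m : ℕ} (x₀ x₁ α : ℝ) (S T : Fin m → ℝ → ℝ) : ℝ :=
  ⨆ i : Fin m,
    ((⨆ x : Set.Icc x₀ x₁, |S i x.1 - T i x.1|) +
     (⨆ x : Set.Icc x₀ x₁, |deriv (S i) x.1 - deriv (T i) x.1|) +
     ⨆ p : Set.Icc x₀ x₁ × Set.Icc x₀ x₁,
       |(deriv (S i) p.1.1 - deriv (T i) p.1.1) - (deriv (S i) p.2.1 - deriv (T i) p.2.1)| /
         |p.1.1 - p.2.1| ^ α)

/-
For each `N`, the condition "some `Φ(x, r)` has more than `N` elements" is open, and the WSP fails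
exactly when it holds for every `N`. Openness: `N + 1` distinct elements of `Φ(x, r)` come from
finitely many words `u`, subject to finitely many strict inequalities (`r < diam S_{u⁻}(Λ)`, and
two distinct restrictions differ at some point of `Λ`), so all of them hold with a common margin
`δ > 0`. A perturbation of size `ε` in sup norm moves every point `S_u(π(j))` of `S_u(Λ)` by at
most `2ε / (1 - ρ)`, hence every diameter by at most twice that; for `ε` small the same words give
more than `N` elements of `Φ(x', r + 2δ)` for the perturbed system.
-/

open Set Filter Topology Metric
open scoped NNReal

section Words

variable {m : ℕ} (S : Fin m → ℝ → ℝ)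

@[simp]
theorem wordComp_nil : wordComp S [] = id := rfl

@[simp]
theorem wordComp_cons (i : Fin m) (u : List (Fin m)) :
    wordComp S (i :: u) = S i ∘ wordComp S u := rfl

theorem wordComp_append (u v : List (Fin m)) :
    wordComp S (u ++ v) = wordComp S u ∘ wordComp S v := by
  induction u with
  | nil => rfl
  | cons i u ih => simp only [List.cons_append, wordComp_cons, ih, Function.comp_assoc]

theorem mapsTo_wordComp {X : Set ℝ} (hS : ∀ i, MapsTo (S i) X X) (u : List (Fin m)) :
    MapsTo (wordComp S u) X X := by
  induction u with
  | nil => exact mapsTo_id X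
  | cons i u ih => exact (hS i).comp ih

theorem image_wordComp_attractor (x₀ : ℝ) (u : List (Fin m)) :
    wordComp S u '' attractor S x₀ = range fun j => wordComp S u (natProj S x₀ j) :=
  (range_comp _ _).symm

end Words

structure IsContractiveIFS {m : ℕ} (S : Fin m → ℝ → ℝ) (X : Set ℝ) (K : ℝ≥0) : Prop where
  mapsTo : ∀ i, MapsTo (S i) X X
  lipschitzOnWith : ∀ i, LipschitzOnWith K (S i) X
  lt_one : K < 1

namespace IsContractiveIFS

variable {m : ℕ} {S T : Fin m → ℝ → ℝ} {X : Set ℝ} {K : ℝ≥0} {x₀ ε : ℝ}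

theorem lipschitzOnWith_wordComp (hS : IsContractiveIFS S X K) (u : List (Fin m)) :
    LipschitzOnWith (K ^ u.length) (wordComp S u) X := by
  induction u with
  | nil => simpa using LipschitzWith.id.lipschitzOnWith
  | cons i u ih =>
    simpa [pow_succ'] using (hS.lipschitzOnWith i).comp ih (mapsTo_wordComp S hS.mapsTo u)

theorem dist_wordComp_le (hS : IsContractiveIFS S X K) (u : List (Fin m)) {x y : ℝ}
    (hx : x ∈ X) (hy : y ∈ X) : dist (wordComp S u x) (wordComp S u y) ≤ dist x y :=
  calc dist (wordComp S u x) (wordComp S u y) ≤ (K : ℝ) ^ u.length * dist x y := by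
        exact_mod_cast (hS.lipschitzOnWith_wordComp u).dist_le_mul x hx y hy
    _ ≤ dist x y :=
        mul_le_of_le_one_left dist_nonneg (pow_le_one₀ K.2 (NNReal.coe_le_one.2 hS.lt_one.le))

theorem tendsto_natProj (hS : IsContractiveIFS S X K) (hX : IsCompact X) (hx₀ : x₀ ∈ X)
    (j : ℕ → Fin m) :
    Tendsto (fun n => wordComp S (List.ofFn fun k : Fin n => j k) x₀) atTop
      (𝓝 (natProj S x₀ j)) := by
  refine (cauchySeq_of_le_geometric (K : ℝ) (diam X) hS.lt_one fun n => ?_).tendsto_limUnder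
  have hSx₀ : S (j n) x₀ ∈ X := hS.mapsTo _ hx₀
  rw [List.ofFn_succ', List.concat_eq_append, wordComp_append]
  calc _ ≤ (K : ℝ) ^ n * dist x₀ (S (j n) x₀) := by
        simpa using (hS.lipschitzOnWith_wordComp (List.ofFn fun k : Fin n => j k)).dist_le_mul
          x₀ hx₀ _ hSx₀
    _ ≤ K ^ n * diam X := by gcongr; exact dist_le_diam_of_mem hX.isBounded hx₀ hSx₀
    _ = diam X * K ^ n := mul_comm _ _

theorem natProj_mem (hS : IsContractiveIFS S X K) (hX : IsCompact X) (hx₀ : x₀ ∈ X)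
    (j : ℕ → Fin m) : natProj S x₀ j ∈ X :=
  hX.isClosed.mem_of_tendsto (hS.tendsto_natProj hX hx₀ j)
    (Eventually.of_forall fun _ => mapsTo_wordComp S hS.mapsTo _ hx₀)

theorem isBounded_image_wordComp_attractor (hS : IsContractiveIFS S X K) (hX : IsCompact X)
    (hx₀ : x₀ ∈ X) (u : List (Fin m)) :
    Bornology.IsBounded (wordComp S u '' attractor S x₀) := by
  refine hX.isBounded.subset ?_
  rintro _ ⟨_, ⟨j, rfl⟩, rfl⟩
  exact mapsTo_wordComp S hS.mapsTo u (hS.natProj_mem hX hx₀ j)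

theorem dist_wordComp_wordComp_le (hS : IsContractiveIFS S X K) (hT : ∀ i, MapsTo (T i) X X)
    (hε : 0 ≤ ε) (hST : ∀ i, ∀ y ∈ X, dist (S i y) (T i y) ≤ ε) (u : List (Fin m)) {y : ℝ}
    (hy : y ∈ X) : dist (wordComp S u y) (wordComp T u y) ≤ ε / (1 - K) := by
  have hK : (0 : ℝ) < 1 - K := sub_pos.2 hS.lt_one
  induction u with
  | nil => simpa using div_nonneg hε hK.le
  | cons i u ih =>
    have hTy : wordComp T u y ∈ X := mapsTo_wordComp T hT u hy
    calc dist (S i (wordComp S u y)) (T i (wordComp T u y))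
        ≤ dist (S i (wordComp S u y)) (S i (wordComp T u y))
          + dist (S i (wordComp T u y)) (T i (wordComp T u y)) := dist_triangle _ _ _
      _ ≤ K * (ε / (1 - K)) + ε := by
          gcongr
          · exact ((hS.lipschitzOnWith i).dist_le_mul _
              (mapsTo_wordComp S hS.mapsTo u hy) _ hTy).trans (by gcongr)
          · exact hST i _ hTy
      _ = ε / (1 - K) := by field_simp; ring

theorem dist_natProj_le (hS : IsContractiveIFS S X K) (hT : IsContractiveIFS T X K)
    (hX : IsCompact X) (hx₀ : x₀ ∈ X) (hε : 0 ≤ ε)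
    (hST : ∀ i, ∀ y ∈ X, dist (S i y) (T i y) ≤ ε) (j : ℕ → Fin m) :
    dist (natProj S x₀ j) (natProj T x₀ j) ≤ ε / (1 - K) :=
  le_of_tendsto ((hS.tendsto_natProj hX hx₀ j).dist (hT.tendsto_natProj hX hx₀ j))
    (Eventually.of_forall fun _ => hS.dist_wordComp_wordComp_le hT.mapsTo hε hST _ hx₀)

theorem dist_wordComp_natProj_le (hS : IsContractiveIFS S X K) (hT : IsContractiveIFS T X K)
    (hX : IsCompact X) (hx₀ : x₀ ∈ X) (hε : 0 ≤ ε)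
    (hST : ∀ i, ∀ y ∈ X, dist (S i y) (T i y) ≤ ε) (u : List (Fin m)) (j : ℕ → Fin m) :
    dist (wordComp S u (natProj S x₀ j)) (wordComp T u (natProj T x₀ j)) ≤ 2 * (ε / (1 - K)) := by
  have hTj := hT.natProj_mem hX hx₀ j
  calc _ ≤ dist (wordComp S u (natProj S x₀ j)) (wordComp S u (natProj T x₀ j))
        + dist (wordComp S u (natProj T x₀ j)) (wordComp T u (natProj T x₀ j)) :=
        dist_triangle _ _ _
    _ ≤ ε / (1 - K) + ε / (1 - K) := by
        gcongr
        · exact (hS.dist_wordComp_le u (hS.natProj_mem hX hx₀ j) hTj).trans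
            (hS.dist_natProj_le hT hX hx₀ hε hST j)
        · exact hS.dist_wordComp_wordComp_le hT.mapsTo hε hST u hTj
    _ = _ := (two_mul _).symm

end IsContractiveIFS

theorem diam_range_le_of_dist_le {α ι : Type*} [PseudoMetricSpace α] {f g : ι → α} {δ : ℝ}
    (hf : Bornology.IsBounded (range f)) (hδ : 0 ≤ δ) (hfg : ∀ i, dist (f i) (g i) ≤ δ) :
    diam (range g) ≤ diam (range f) + 2 * δ := by
  refine diam_le_of_forall_dist_le (by positivity) ?_
  rintro _ ⟨i, rfl⟩ _ ⟨j, rfl⟩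
  calc dist (g i) (g j) ≤ dist (g i) (f i) + dist (f i) (f j) + dist (f j) (g j) :=
        dist_triangle4 _ _ _ _
    _ ≤ δ + diam (range f) + δ := by
        gcongr
        · exact dist_comm (g i) (f i) ▸ hfg i
        · exact dist_le_diam_of_mem hf (mem_range_self i) (mem_range_self j)
        · exact hfg j
    _ = diam (range f) + 2 * δ := by ring

section Phi

variable {m : ℕ} {S T : Fin m → ℝ → ℝ} {x₀ x r δ : ℝ} {u : List (Fin m)} {U : Set (List (Fin m))}

def phiWords (S : Fin m → ℝ → ℝ) (x₀ x r : ℝ) : Set (List (Fin m)) :=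
  {u | diam (wordComp S u '' attractor S x₀) ≤ r ∧
    r < diam (wordComp S u.dropLast '' attractor S x₀) ∧
    (wordComp S u '' attractor S x₀ ∩ closedBall x r).Nonempty}

def wordRestrict (S : Fin m → ℝ → ℝ) (x₀ : ℝ) (u : List (Fin m)) : attractor S x₀ → ℝ :=
  fun p => wordComp S u p

theorem PhiFam_eq_image : PhiFam S x₀ x r = wordRestrict S x₀ '' phiWords S x₀ x r := by
  ext g
  constructor
  · rintro ⟨u, hdiam, hdiam', hball, rfl⟩
    exact ⟨u, ⟨hdiam, hdiam', hball⟩, rfl⟩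
  · rintro ⟨u, ⟨hdiam, hdiam', hball⟩, rfl⟩
    exact ⟨u, hdiam, hdiam', hball, rfl⟩

def WordImagesClose (S T : Fin m → ℝ → ℝ) (x₀ δ : ℝ) : Prop :=
  ∀ u j, dist (wordComp S u (natProj S x₀ j)) (wordComp T u (natProj T x₀ j)) ≤ δ

theorem WordImagesClose.symm (h : WordImagesClose S T x₀ δ) : WordImagesClose T S x₀ δ :=
  fun u j => dist_comm (wordComp T u (natProj T x₀ j)) _ ▸ h u j

theorem WordImagesClose.diam_image_le (h : WordImagesClose S T x₀ δ) (hδ : 0 ≤ δ)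
    (hS : Bornology.IsBounded (wordComp S u '' attractor S x₀)) :
    diam (wordComp T u '' attractor T x₀) ≤ diam (wordComp S u '' attractor S x₀) + 2 * δ := by
  simp only [image_wordComp_attractor] at hS ⊢
  exact diam_range_le_of_dist_le hS hδ (h u)

theorem WordImagesClose.mem_phiWords (h : WordImagesClose S T x₀ δ) (hδ : 0 ≤ δ)
    (hSb : ∀ u, Bornology.IsBounded (wordComp S u '' attractor S x₀))
    (hTb : ∀ u, Bornology.IsBounded (wordComp T u '' attractor T x₀)) {j₀ : ℕ → Fin m}
    (hu : u ∈ phiWords S x₀ (natProj S x₀ j₀) r)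
    (hmargin : r + 4 * δ < diam (wordComp S u.dropLast '' attractor S x₀)) :
    u ∈ phiWords T x₀ (natProj T x₀ j₀) (r + 2 * δ) := by
  obtain ⟨hdiam, -, q, hqu, hqx⟩ := hu
  refine ⟨?_, ?_, ?_⟩
  · linarith [h.diam_image_le hδ (hSb u)]
  · linarith [h.symm.diam_image_le hδ (hTb u.dropLast)]
  · rw [image_wordComp_attractor] at hqu ⊢
    obtain ⟨j, rfl⟩ := hqu
    refine ⟨_, mem_range_self j, ?_⟩
    rw [mem_closedBall] at hqx ⊢
    have hj₀ : dist (natProj S x₀ j₀) (natProj T x₀ j₀) ≤ δ := h [] j₀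
    calc _ ≤ dist (wordComp T u (natProj T x₀ j)) (wordComp S u (natProj S x₀ j))
          + dist (wordComp S u (natProj S x₀ j)) (natProj S x₀ j₀)
          + dist (natProj S x₀ j₀) (natProj T x₀ j₀) := dist_triangle4 _ _ _ _
      _ ≤ δ + r + δ := by gcongr; exact h.symm u j
      _ = r + 2 * δ := by ring

theorem WordImagesClose.wordRestrict_ne (h : WordImagesClose S T x₀ δ) {v : List (Fin m)}
    {j : ℕ → Fin m}
    (hsep : 2 * δ < dist (wordComp S u (natProj S x₀ j)) (wordComp S v (natProj S x₀ j))) :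
    wordRestrict T x₀ u ≠ wordRestrict T x₀ v := by
  intro huv
  have hT : wordComp T u (natProj T x₀ j) = wordComp T v (natProj T x₀ j) :=
    congrFun huv ⟨_, mem_range_self j⟩
  have hT0 : dist (wordComp T u (natProj T x₀ j)) (wordComp T v (natProj T x₀ j)) = 0 := by
    rw [hT, dist_self]
  linarith [h u j, h.symm v j, dist_triangle4 (wordComp S u (natProj S x₀ j))
    (wordComp T u (natProj T x₀ j)) (wordComp T v (natProj T x₀ j)) (wordComp S v (natProj S x₀ j))]

theorem exists_pos_phiWords_margin (hU : U.Finite) (hUΦ : U ⊆ phiWords S x₀ x r)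
    (hinj : InjOn (wordRestrict S x₀) U) :
    ∃ δ > 0, ∀ u ∈ U, r + 4 * δ < diam (wordComp S u.dropLast '' attractor S x₀) ∧
      ∀ v ∈ U, u ≠ v →
        ∃ j, 2 * δ < dist (wordComp S u (natProj S x₀ j)) (wordComp S v (natProj S x₀ j)) := by
  have hlim : ∀ c : ℝ, Tendsto (fun δ : ℝ => c + 4 * δ) (𝓝 0) (𝓝 c) := fun c =>
    (continuous_const.add (continuous_const.mul continuous_id)).tendsto' 0 c (by simp)
  have hsep : ∀ u ∈ U, ∀ v ∈ U, u ≠ v → ∃ j, 0 <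
      dist (wordComp S u (natProj S x₀ j)) (wordComp S v (natProj S x₀ j)) := by
    intro u hu v hv huv
    obtain ⟨⟨_, j, rfl⟩, hne⟩ := Function.ne_iff.1 fun h => huv (hinj hu hv h)
    exact ⟨j, dist_pos.2 hne⟩
  have hev : ∀ᶠ δ in 𝓝 (0 : ℝ), ∀ u ∈ U,
      r + 4 * δ < diam (wordComp S u.dropLast '' attractor S x₀) ∧
      ∀ v ∈ U, u ≠ v →
        ∃ j, 2 * δ < dist (wordComp S u (natProj S x₀ j)) (wordComp S v (natProj S x₀ j)) := by
    refine hU.eventually_all.2 fun u hu => ((hlim r).eventually_lt_const (hUΦ hu).2.1).and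
      (hU.eventually_all.2 fun v hv => ?_)
    by_cases huv : u = v
    · exact Eventually.of_forall fun _ h => absurd huv h
    obtain ⟨j, hj⟩ := hsep u hu v hv huv
    filter_upwards [(hlim 0).eventually_lt_const hj] with δ hδ _
    exact ⟨j, by linarith⟩
  obtain ⟨δ, hδ, hδpos⟩ :=
    ((hev.filter_mono (nhdsWithin_le_nhds (s := Ioi 0))).and self_mem_nhdsWithin).exists
  exact ⟨δ, hδpos, hδ⟩

end Phi

theorem Set.exists_finite_subset_injOn_of_lt_encard_image {α β : Type*} {f : α → β} {s : Set α}
    {N : ℕ} (h : (N : ℕ∞) < (f '' s).encard) :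
    ∃ U ⊆ s, U.Finite ∧ InjOn f U ∧ (N : ℕ∞) < U.encard := by
  obtain ⟨s', hs's, hbij⟩ := exists_subset_bijOn s f
  have hN : ((N + 1 : ℕ) : ℕ∞) ≤ s'.encard := by
    rw [← hbij.injOn.encard_image, hbij.image_eq]
    exact_mod_cast Order.add_one_le_of_lt h
  obtain ⟨U, hUs', hU⟩ := exists_subset_encard_eq hN
  refine ⟨U, hUs'.trans hs's, finite_of_encard_eq_coe hU, hbij.injOn.mono hUs', ?_⟩
  rw [hU]
  exact_mod_cast N.lt_succ_self

def PhiFamExceeds {m : ℕ} (S : Fin m → ℝ → ℝ) (x₀ : ℝ) (N : ℕ) : Prop :=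
  ∃ x ∈ attractor S x₀, ∃ r > (0 : ℝ), (N : ℕ∞) < (PhiFam S x₀ x r).encard

theorem not_WSPholds_iff_forall_phiFamExceeds {m : ℕ} {S : Fin m → ℝ → ℝ} {x₀ : ℝ} :
    ¬ WSPholds S x₀ ↔ ∀ N, PhiFamExceeds S x₀ N := by
  simp only [WSPholds, PhiFamExceeds, ← encard_le_coe_iff_finite_ncard_le]
  push Not
  rfl

theorem IsContractiveIFS.exists_pos_phiFamExceeds {m : ℕ} {S : Fin m → ℝ → ℝ} {X : Set ℝ}
    {K : ℝ≥0} {x₀ : ℝ} {N : ℕ} (hS : IsContractiveIFS S X K) (hX : IsCompact X)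
    (hx₀ : x₀ ∈ X) (hN : PhiFamExceeds S x₀ N) :
    ∃ ε > 0, ∀ T, IsContractiveIFS T X K → (∀ i, ∀ y ∈ X, dist (S i y) (T i y) ≤ ε) →
      PhiFamExceeds T x₀ N := by
  obtain ⟨_, ⟨j₀, rfl⟩, r, hr, hN⟩ := hN
  rw [PhiFam_eq_image] at hN
  obtain ⟨U, hUΦ, hU, hinj, hNU⟩ := exists_finite_subset_injOn_of_lt_encard_image hN
  obtain ⟨δ, hδ, hmargin⟩ := exists_pos_phiWords_margin hU hUΦ hinj
  have hK : (0 : ℝ) < 1 - K := sub_pos.2 hS.lt_one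
  refine ⟨δ * (1 - K) / 2, by positivity, fun T hT hST => ?_⟩
  have hclose : WordImagesClose S T x₀ δ := fun u j => by
    convert hS.dist_wordComp_natProj_le hT hX hx₀ (by positivity) hST u j using 1
    field_simp
  have hinjT : InjOn (wordRestrict T x₀) U := fun u hu v hv huv => by
    by_contra hne
    obtain ⟨j, hj⟩ := (hmargin u hu).2 v hv hne
    exact hclose.wordRestrict_ne hj huv
  have hUΦT : U ⊆ phiWords T x₀ (natProj T x₀ j₀) (r + 2 * δ) := fun u hu =>
    hclose.mem_phiWords hδ.le (hS.isBounded_image_wordComp_attractor hX hx₀)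
      (hT.isBounded_image_wordComp_attractor hX hx₀) (hUΦ hu) (hmargin u hu).1
  refine ⟨_, mem_range_self j₀, r + 2 * δ, by positivity, ?_⟩
  rw [PhiFam_eq_image]
  calc (N : ℕ∞) < U.encard := hNU
    _ = (wordRestrict T x₀ '' U).encard := hinjT.encard_image.symm
    _ ≤ _ := encard_mono (image_mono hUΦT)

theorem isContractiveIFS_of_mem_ThetaSet {m : ℕ} {x₀ x₁ β ρ α : ℝ} {S : Fin m → ℝ → ℝ}
    (hβ : 0 < β) (hρ : ρ < 1) (hS : S ∈ ThetaSet m x₀ x₁ β ρ α) :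
    IsContractiveIFS S (Icc x₀ x₁) ρ.toNNReal where
  mapsTo i := (hS i).1
  lipschitzOnWith i := by
    refine (convex_Icc x₀ x₁).lipschitzOnWith_of_nnnorm_deriv_le (fun x hx => ?_)
      (fun x hx => ?_)
    · -- `β > 0` excludes the junk value `deriv = 0`, so `S i` is differentiable at the endpoints
      by_contra hdiff
      have hβx := ((hS i).2.2.2.1 x hx).1
      rw [deriv_zero_of_not_differentiableAt hdiff, abs_zero] at hβx
      linarith
    · rw [← NNReal.coe_le_coe, coe_nnnorm, Real.norm_eq_abs, Real.coe_toNNReal']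
      exact le_max_of_le_left ((hS i).2.2.2.1 x hx).2
  lt_one := Real.toNNReal_lt_one.2 hρ

theorem dist_le_distTheta {m : ℕ} {x₀ x₁ α : ℝ} {S T : Fin m → ℝ → ℝ}
    (hS : ∀ i, MapsTo (S i) (Icc x₀ x₁) (Icc x₀ x₁))
    (hT : ∀ i, MapsTo (T i) (Icc x₀ x₁) (Icc x₀ x₁)) (i : Fin m) {y : ℝ}
    (hy : y ∈ Icc x₀ x₁) : dist (S i y) (T i y) ≤ distTheta x₀ x₁ α S T := by
  refine le_trans ?_ (le_ciSup (finite_range _).bddAbove i)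
  refine le_add_of_le_of_nonneg (le_add_of_le_of_nonneg ?_
    (Real.iSup_nonneg fun _ => abs_nonneg _)) (Real.iSup_nonneg fun _ => by positivity)
  refine le_ciSup (f := fun z : Icc x₀ x₁ => |S i z.1 - T i z.1|) ⟨x₁ - x₀, ?_⟩ ⟨y, hy⟩
  rintro _ ⟨z, rfl⟩
  exact Real.dist_le_of_mem_Icc (hS i z.2) (hT i z.2)

theorem stmt12_general (m : ℕ) (x₀ x₁ β ρ α : ℝ) (hx : x₀ < x₁)
    (hβ : 0 < β) (hρ : ρ < 1) :
    ∃ V : ℕ → Set {S : Fin m → ℝ → ℝ // S ∈ ThetaSet m x₀ x₁ β ρ α},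
      (∀ n : ℕ, ∀ S ∈ V n, ∃ ε > (0 : ℝ),
        ∀ T : {S : Fin m → ℝ → ℝ // S ∈ ThetaSet m x₀ x₁ β ρ α},
          distTheta x₀ x₁ α S.1 T.1 < ε → T ∈ V n) ∧
      {S : {S : Fin m → ℝ → ℝ // S ∈ ThetaSet m x₀ x₁ β ρ α} | ¬ WSPholds S.1 x₀} =
        ⋂ n : ℕ, V n := by
  have hΘ := fun (S : {S // S ∈ ThetaSet m x₀ x₁ β ρ α}) =>
    isContractiveIFS_of_mem_ThetaSet hβ hρ S.2
  refine ⟨fun N => {S | PhiFamExceeds S.1 x₀ N}, fun N S hS => ?_, ?_⟩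
  · obtain ⟨ε, hε, hT⟩ :=
      (hΘ S).exists_pos_phiFamExceeds isCompact_Icc (left_mem_Icc.2 hx.le) hS
    exact ⟨ε, hε, fun T hST => hT T.1 (hΘ T) fun i y hy =>
      (dist_le_distTheta (hΘ S).mapsTo (hΘ T).mapsTo i hy).trans hST.le⟩
  · ext S
    simp only [mem_ofPred_eq, mem_iInter, not_WSPholds_iff_forall_phiFamExceeds]

/-- Lemma 4.2: in the metric space `Θ_{β,ρ}^m(X)` the set of IFSs
failing the Weak Separation Property is a `G_δ` set, i.e. it is a countable
intersection of sets that are open for the metric `distTheta`. -/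
theorem stmt12 (m : ℕ) (x₀ x₁ β ρ α : ℝ) (hx : x₀ < x₁)
    (hβ : 0 < β) (hρ : ρ < 1) (hβρ : β ≤ ρ) (hα : 0 < α) (hα1 : α ≤ 1) :
    ∃ V : ℕ → Set {S : Fin m → ℝ → ℝ // S ∈ ThetaSet m x₀ x₁ β ρ α},
      (∀ n : ℕ, ∀ S ∈ V n, ∃ ε > (0 : ℝ),
        ∀ T : {S : Fin m → ℝ → ℝ // S ∈ ThetaSet m x₀ x₁ β ρ α},
          distTheta x₀ x₁ α S.1 T.1 < ε → T ∈ V n) ∧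
      {S : {S : Fin m → ℝ → ℝ // S ∈ ThetaSet m x₀ x₁ β ρ α} | ¬ WSPholds S.1 x₀} =
        ⋂ n : ℕ, V n :=
  stmt12_general m x₀ x₁ β ρ α hx hβ hρ
end
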